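/- Let Y be a random variable with Gaussian law N(m, σ²), m ∈ ℝ, σ > 0, and let F(t) = Φ((t − m)/σ) be its cumulative distribution function. Then E[Y·F(Y)] = (1/2)·(m + σ/√π). -/

import Mathlib

open MeasureTheory

/-- The probability density function of the standard normal distribution `N(0,1)`. -/
noncomputable def stdNormalPDF (u : ℝ) : ℝ :=
  Real.exp (-u ^ 2 / 2) / Real.sqrt (2 * Real.pi)

/-- The cumulative distribution function of the standard normal distribution `N(0,1)`. -/
noncomputable def stdNormalCDF (z : ℝ) : ℝ :=
  ∫ u in Set.Iic z, stdNormalPDF u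

/-!
Write `Y = σ Z + m` with `Z ∼ N(0,1)`, so that `E[Y F(Y)] = σ E[Z Φ(Z)] + m E[Φ(Z)]`.
Since `Φ' = φ`, `E[Φ(Z)] = ∫ Φ Φ' = [Φ²/2] = 1/2`, and Stein's identity `E[Z g(Z)] = E[g'(Z)]`
turns `E[Z Φ(Z)]` into the Gaussian integral `∫ φ² = 1/(2√π)`.
-/

open Real Filter Topology ProbabilityTheory

lemma stdNormalPDF_eq_gaussianPDFReal : stdNormalPDF = gaussianPDFReal 0 1 := by
  ext u
  simp [stdNormalPDF, gaussianPDFReal, div_eq_inv_mul]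

lemma integrable_stdNormalPDF : Integrable stdNormalPDF := by
  rw [stdNormalPDF_eq_gaussianPDFReal]
  exact integrable_gaussianPDFReal 0 1

lemma continuous_stdNormalPDF : Continuous stdNormalPDF := by
  unfold stdNormalPDF
  fun_prop

lemma hasDerivAt_stdNormalPDF (u : ℝ) : HasDerivAt stdNormalPDF (-u * stdNormalPDF u) u := by
  have h : HasDerivAt (fun x : ℝ => -x ^ 2 / 2) (-u) u :=
    ((hasDerivAt_pow 2 u).neg.div_const 2).congr_deriv (by norm_num; ring)
  exact (h.exp.div_const √(2 * π)).congr_deriv (by rw [stdNormalPDF]; ring)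

lemma tendsto_stdNormalPDF_cocompact : Tendsto stdNormalPDF (cocompact ℝ) (𝓝 0) := by
  have h : Tendsto (fun u : ℝ => -‖u‖ ^ 2 / 2) (cocompact ℝ) atBot :=
    (tendsto_neg_atTop_atBot.comp
      ((tendsto_pow_atTop two_ne_zero).comp tendsto_norm_cocompact_atTop)).atBot_div_const two_pos
  have h' := (tendsto_exp_atBot.comp h).div_const √(2 * π)
  rw [zero_div] at h'
  refine h'.congr fun u => ?_
  simp [stdNormalPDF]

lemma integrable_mul_stdNormalPDF : Integrable fun u => u * stdNormalPDF u := by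
  refine ((integrable_mul_exp_neg_mul_sq (b := 2⁻¹) (by norm_num)).div_const √(2 * π)).congr
    (ae_of_all _ fun u => ?_)
  simp only [stdNormalPDF]
  ring_nf

lemma stdNormalPDF_sq (u : ℝ) : stdNormalPDF u ^ 2 = exp (-1 * u ^ 2) / (2 * π) := by
  rw [stdNormalPDF, div_pow, sq_sqrt (by positivity), sq, ← exp_add]
  ring_nf

lemma integrable_stdNormalPDF_sq : Integrable fun u => stdNormalPDF u ^ 2 := by
  simp_rw [stdNormalPDF_sq]
  exact (integrable_exp_neg_mul_sq one_pos).div_const _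

lemma integral_stdNormalPDF_sq : ∫ u, stdNormalPDF u ^ 2 = 1 / (2 * √π) := by
  simp_rw [stdNormalPDF_sq]
  rw [integral_div, integral_gaussian, div_one]
  have := mul_self_sqrt pi_pos.le
  field_simp
  linarith

lemma stdNormalCDF_eq_cdf : stdNormalCDF = cdf (gaussianReal 0 1) := by
  ext z
  rw [cdf_eq_real, measureReal_def, gaussianReal_apply_eq_integral 0 one_ne_zero,
    ENNReal.toReal_ofReal
      (setIntegral_nonneg measurableSet_Iic fun u _ => gaussianPDFReal_nonneg 0 1 u),
    stdNormalCDF, stdNormalPDF_eq_gaussianPDFReal]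

lemma hasDerivAt_stdNormalCDF (z : ℝ) : HasDerivAt stdNormalCDF (stdNormalPDF z) z := by
  have h (t : ℝ) : stdNormalCDF 0 + ∫ u in (0 : ℝ)..t, stdNormalPDF u = stdNormalCDF t := by
    rw [stdNormalCDF, stdNormalCDF, ← intervalIntegral.integral_Iic_sub_Iic
      integrable_stdNormalPDF.integrableOn integrable_stdNormalPDF.integrableOn]
    norm_num
  refine HasDerivAt.congr_of_eventuallyEq ?_ (Eventually.of_forall fun t => (h t).symm)
  exact (intervalIntegral.integral_hasDerivAt_right integrable_stdNormalPDF.intervalIntegrable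
    (continuous_stdNormalPDF.stronglyMeasurableAtFilter _ _)
    continuous_stdNormalPDF.continuousAt).const_add _

lemma continuous_stdNormalCDF : Continuous stdNormalCDF :=
  continuous_iff_continuousAt.2 fun z => (hasDerivAt_stdNormalCDF z).continuousAt

lemma norm_stdNormalCDF_le_one (z : ℝ) : ‖stdNormalCDF z‖ ≤ 1 := by
  rw [stdNormalCDF_eq_cdf, norm_of_nonneg (cdf_nonneg _ z)]
  exact cdf_le_one _ z

lemma integrable_stdNormalCDF_mul {f : ℝ → ℝ} (hf : Integrable f) :
    Integrable fun z => stdNormalCDF z * f z :=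
  hf.bdd_mul continuous_stdNormalCDF.aestronglyMeasurable (ae_of_all _ norm_stdNormalCDF_le_one)

lemma integral_stdNormalCDF_mul_stdNormalPDF : ∫ z, stdNormalCDF z * stdNormalPDF z = 1 / 2 := by
  have hderiv (z : ℝ) :
      HasDerivAt (fun t => stdNormalCDF t ^ 2 / 2) (stdNormalCDF z * stdNormalPDF z) z :=
    (((hasDerivAt_stdNormalCDF z).pow 2).div_const 2).congr_deriv (by ring)
  have hbot := ((tendsto_cdf_atBot (gaussianReal 0 1)).pow 2).div_const 2
  have htop := ((tendsto_cdf_atTop (gaussianReal 0 1)).pow 2).div_const 2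
  rw [← stdNormalCDF_eq_cdf] at hbot htop
  rw [integral_of_hasDerivAt_of_tendsto hderiv
    (integrable_stdNormalCDF_mul integrable_stdNormalPDF) hbot htop]
  norm_num

/-- **Stein's identity**: integrate by parts, using `φ' x = -x φ x`. -/
theorem integral_mul_mul_stdNormalPDF_eq_integral_deriv_mul {g g' : ℝ → ℝ} {C : ℝ}
    (hg : ∀ x, HasDerivAt g (g' x) x) (hC : ∀ x, ‖g x‖ ≤ C)
    (hg' : Integrable fun x => g' x * stdNormalPDF x) :
    ∫ x, g x * (x * stdNormalPDF x) = ∫ x, g' x * stdNormalPDF x := by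
  have hcont : Continuous g := continuous_iff_continuousAt.2 fun x => (hg x).continuousAt
  have hlim {l : Filter ℝ} (hl : l ≤ cocompact ℝ) :
      Tendsto (g * fun x => -stdNormalPDF x) l (𝓝 0) := by
    have hφ : Tendsto (fun x => -stdNormalPDF x) l (𝓝 0) := by
      simpa using (tendsto_stdNormalPDF_cocompact.mono_left hl).neg
    exact isBoundedUnder_le_mul_tendsto_zero (isBoundedUnder_of ⟨C, hC⟩) hφ
  have h := integral_mul_deriv_eq_deriv_mul (v' := fun x => x * stdNormalPDF x)
    (fun x _ => hg x) (fun x _ => (hasDerivAt_stdNormalPDF x).neg.congr_deriv (by ring))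
    (integrable_mul_stdNormalPDF.bdd_mul hcont.aestronglyMeasurable (ae_of_all _ hC))
    (hg'.neg.congr (ae_of_all _ fun x => (mul_neg _ _).symm))
    (hlim atBot_le_cocompact) (hlim atTop_le_cocompact)
  simpa [integral_neg] using h

lemma integral_stdNormalCDF_mul_mul_stdNormalPDF :
    ∫ z, stdNormalCDF z * (z * stdNormalPDF z) = 1 / (2 * √π) := by
  rw [integral_mul_mul_stdNormalPDF_eq_integral_deriv_mul hasDerivAt_stdNormalCDF
    norm_stdNormalCDF_le_one, ← integral_stdNormalPDF_sq]
  · simp_rw [sq]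
  · simpa only [sq] using integrable_stdNormalPDF_sq

lemma gaussianReal_eq_map_stdNormal {m σ : ℝ} {v : NNReal} (hv : (v : ℝ) = σ ^ 2) :
    gaussianReal m v = (gaussianReal 0 1).map (fun z => σ * z + m) := by
  have hscale : (gaussianReal 0 1).map (σ * ·) = gaussianReal 0 v := by
    rw [gaussianReal_map_const_mul, mul_zero, mul_one]
    congr
    exact hv.symm
  calc gaussianReal m v = (gaussianReal 0 v).map (· + m) := by
        rw [gaussianReal_map_add_const, zero_add]
    _ = ((gaussianReal 0 1).map (σ * ·)).map (· + m) := by rw [hscale]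
    _ = (gaussianReal 0 1).map (fun z => σ * z + m) :=
        Measure.map_map (measurable_add_const m) (measurable_const_mul σ)

lemma integral_gaussianReal_eq_integral_stdNormalPDF_smul {E : Type*}
    [NormedAddCommGroup E] [NormedSpace ℝ E] {m σ : ℝ} (hσ : σ ≠ 0) {v : NNReal}
    (hv : (v : ℝ) = σ ^ 2) (f : ℝ → E) :
    ∫ x, f x ∂gaussianReal m v = ∫ z, stdNormalPDF z • f (σ * z + m) := by
  have he : MeasurableEmbedding fun z => σ * z + m :=
    (measurableEmbedding_addRight m).comp (measurableEmbedding_mulLeft₀ hσ)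
  rw [gaussianReal_eq_map_stdNormal hv, he.integral_map,
    integral_gaussianReal_eq_integral_smul one_ne_zero, stdNormalPDF_eq_gaussianPDFReal]

/-- For `Y ∼ N(m, σ²)` with CDF `F(t) = Φ((t − m)/σ)`,
`E[Y·F(Y)] = (1/2)·(m + σ/√π)`. -/
theorem gaussian_cdf_term (m σ : ℝ) (hσ : 0 < σ)
    (v : NNReal) (hv : (v : ℝ) = σ ^ 2) :
    (∫ x, x * stdNormalCDF ((x - m) / σ) ∂(ProbabilityTheory.gaussianReal m v)) =
      (1 / 2) * (m + σ / Real.sqrt Real.pi) := by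
  have hinv (z : ℝ) : (σ * z + m - m) / σ = z := by field_simp; ring
  have hsplit (z : ℝ) : stdNormalPDF z • ((σ * z + m) * stdNormalCDF z) =
      σ * (stdNormalCDF z * (z * stdNormalPDF z)) + m * (stdNormalCDF z * stdNormalPDF z) := by
    rw [smul_eq_mul]; ring
  rw [integral_gaussianReal_eq_integral_stdNormalPDF_smul hσ.ne' hv]
  simp_rw [hinv, hsplit]
  rw [integral_add ((integrable_stdNormalCDF_mul integrable_mul_stdNormalPDF).const_mul σ)
      ((integrable_stdNormalCDF_mul integrable_stdNormalPDF).const_mul m),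
    integral_const_mul, integral_const_mul, integral_stdNormalCDF_mul_mul_stdNormalPDF,
    integral_stdNormalCDF_mul_stdNormalPDF]
  field_simp
  ring
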